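/- In the Active T-Maze, the credit assignment length of the first time step is T: under the unique optimal policy, the optimal initial action (moving Left to the oracle) has expected n-step reward equal to that of moving Right for all n < T, and strictly greater expected n-step reward only at n = T. -/
import Mathlib


open Finset

/-- A T-Maze state: a grid position (horizontal, vertical) and the goal identity
(`true` = upper goal G1, `false` = lower goal G2). -/
abbrev TState : Type := (ℤ × ℤ) × Bool

/-- Observations in the T-Maze. -/
inductive TObs : Type
  | oracle (g : Bool)   -- at the oracle cell the goal is revealed
  | junction
  | goalObs (g : Bool)
  | corridor
  deriving DecidableEq

/-- The four actions: 0 = Left, 1 = Right, 2 = Up, 3 = Down. -/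
def dir : Fin 4 → ℤ × ℤ := ![(-1, 0), (1, 0), (0, 1), (0, -1)]

/-- Valid cells: a corridor from `x = x0` to the junction `(L, 0)`, plus the two goal
cells `(L, 1)` and `(L, -1)`. -/
def validP (x0 L : ℤ) (p : ℤ × ℤ) : Prop :=
  (x0 ≤ p.1 ∧ p.1 ≤ L ∧ p.2 = 0) ∨ (p.1 = L ∧ (p.2 = 1 ∨ p.2 = -1))

instance (x0 L : ℤ) (p : ℤ × ℤ) : Decidable (validP x0 L p) := by
  unfold validP; infer_instance

/-- Deterministic transition: move in the chosen direction, staying in place at walls. -/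
def stepP (x0 L : ℤ) (s : TState) (a : Fin 4) : TState :=
  if validP x0 L (s.1 + dir a) then (s.1 + dir a, s.2) else s

/-- The cell of the sampled goal. -/
def goalCell (L : ℤ) (g : Bool) : ℤ × ℤ := (L, if g then 1 else -1)

/-- Reward `R_t` of the Active T-Maze (horizon `T`): the oracle `O` is at `x = 0`, the
start `S` at `x = 1`, the junction at `x = L = T - 2`. `R_1 = 0`,
`R_t = (1[x_{t+1} ≥ t-1] - 1)/(T-2)` for `2 ≤ t ≤ T - 1`, and `R_T = 1[o_{T+1} = G]`. -/
noncomputable def rewA (T : ℕ) (t : ℕ) (s : TState) (a : Fin 4) : ℝ :=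
  let L : ℤ := (T : ℤ) - 2
  let s' := stepP 0 L s a
  if t = 1 then 0
  else if t < T then ((if (t : ℤ) - 1 ≤ s'.1.1 then (1 : ℝ) else 0) - 1) / ((T : ℝ) - 2)
  else if s'.1 = goalCell L s.2 then 1 else 0

/-- Sum of the first `n` rewards of a deterministic open-loop plan from time `t`. -/
noncomputable def dRetA (T : ℕ) (plan : ℕ → Fin 4) : ℕ → ℕ → TState → ℝ
  | 0, _, _ => 0
  | n + 1, t, s =>
      rewA T t s (plan t) + dRetA T plan n (t + 1) (stepP 0 ((T : ℤ) - 2) s (plan t))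

/-- The unique optimal behaviour: Left to the oracle, then Right to the junction, then
toward the observed goal `g`. -/
def planLeft (T : ℕ) (g : Bool) (t : ℕ) : Fin 4 :=
  if t = 1 then 0 else if t < T then 1 else if g then 2 else 3

/-- The deviating behaviour: Right first (never observing the goal), Right until the
junction, then a guess (Up) at the final step. -/
def planRight (T : ℕ) (t : ℕ) : Fin 4 :=
  if t < T then 1 else 2

/-- Expected `n`-step reward from the initial history of moving Left first and then
following the optimal policy, averaged over the uniform goal. -/
noncomputable def GLeft (T n : ℕ) : ℝ :=
  (dRetA T (planLeft T true) n 1 ((1, 0), true) +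
    dRetA T (planLeft T false) n 1 ((1, 0), false)) / 2

/-- Expected `n`-step reward from the initial history of moving Right first,
averaged over the uniform goal. -/
noncomputable def GRight (T n : ℕ) : ℝ :=
  (dRetA T (planRight T) n 1 ((1, 0), true) +
    dRetA T (planRight T) n 1 ((1, 0), false)) / 2

lemma dir0 : dir 0 = (-1,0) := rfl
lemma dir1 : dir 1 = (1,0) := rfl

lemma step_right (T : ℕ) (g : Bool) (x : ℤ) (h1 : 0 ≤ x + 1) (h2 : x + 1 ≤ (T:ℤ)-2) :
    stepP 0 ((T:ℤ)-2) ((x, 0), g) 1 = ((x+1, 0), g) := by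
  have hv : validP 0 ((T:ℤ)-2) (((x, 0) : ℤ×ℤ) + dir 1) := by
    rw [dir1]; simp only [validP, Prod.mk_add_mk, Prod.fst, Prod.snd]; omega
  rw [stepP, if_pos hv, dir1]
  simp

lemma step_wall (T : ℕ) (g : Bool) (hT : 4 ≤ T) :
    stepP 0 ((T:ℤ)-2) (((T:ℤ)-2, 0), g) 1 = (((T:ℤ)-2, 0), g) := by
  have hv : ¬ validP 0 ((T:ℤ)-2) (((((T:ℤ)-2, 0)) : ℤ×ℤ) + dir 1) := by
    rw [dir1]; simp only [validP, Prod.mk_add_mk]; push_neg; omega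
  rw [stepP, if_neg hv]

lemma rew_mid (T t : ℕ) (s : TState) (a : Fin 4) (h1 : t ≠ 1) (h2 : t < T)
    (h3 : (t:ℤ) - 1 ≤ (stepP 0 ((T:ℤ)-2) s a).1.1) :
    rewA T t s a = 0 := by
  simp [rewA, h1, h2, h3]

lemma retLeft0 (T : ℕ) (hT : 4 ≤ T) (g : Bool) :
    ∀ n t x, 2 ≤ t → t + n ≤ T → x = (t:ℤ)-2 →
      dRetA T (planLeft T g) n t ((x, 0), g) = 0 := by
  intro n
  induction n with
  | zero => intro t x _ _ _; rfl
  | succ n ih =>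
    intro t x ht htn hx
    have htT : t < T := by omega
    have hplan : planLeft T g t = 1 := by
      unfold planLeft; rw [if_neg (by omega), if_pos htT]
    have hstep : stepP 0 ((T:ℤ)-2) ((x, 0), g) (planLeft T g t) = ((x+1, 0), g) := by
      rw [hplan]; exact step_right T g x (by omega) (by push_cast [hx]; push_cast; omega)
    simp only [dRetA, hstep]
    rw [rew_mid T t _ _ (by omega) htT (by rw [hstep]; simp; omega),
      ih (t+1) (x+1) (by omega) (by omega) (by push_cast; omega)]
    ring

lemma retLeft_final (T : ℕ) (hT : 4 ≤ T) (g : Bool) :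
    dRetA T (planLeft T g) 1 T (((T:ℤ)-2, 0), g) = 1 := by
  have hplan : planLeft T g T = if g then 2 else 3 := by
    unfold planLeft; rw [if_neg (by omega), if_neg (by omega)]
  have hstep : stepP 0 ((T:ℤ)-2) (((T:ℤ)-2, 0), g) (planLeft T g T) =
      (((T:ℤ)-2, if g then 1 else -1), g) := by
    rw [hplan]; cases g <;> simp [stepP, validP, dir]
  simp only [dRetA, hstep]
  rw [rewA]
  simp only [hstep]
  rw [if_neg (by omega), if_neg (by omega), if_pos (by simp [goalCell])]
  norm_num

lemma retLeft1 (T : ℕ) (hT : 4 ≤ T) (g : Bool) :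
    ∀ n t x, 2 ≤ t → 1 ≤ n → t + n = T + 1 → x = (t:ℤ)-2 →
      dRetA T (planLeft T g) n t ((x, 0), g) = 1 := by
  intro n
  induction n with
  | zero => omega
  | succ n ih =>
    intro t x ht hn htn hx
    rcases Nat.eq_zero_or_pos n with hn0 | hn0
    · subst hn0
      rw [show t = T from by omega] at hx ⊢
      rw [show x = (T:ℤ)-2 from hx]
      exact retLeft_final T hT g
    · have htT : t < T := by omega
      have hplan : planLeft T g t = 1 := by
        unfold planLeft; rw [if_neg (by omega), if_pos htT]
      have hstep : stepP 0 ((T:ℤ)-2) ((x, 0), g) (planLeft T g t) = ((x+1, 0), g) := by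
        rw [hplan]; exact step_right T g x (by omega) (by push_cast [hx]; omega)
      simp only [dRetA, hstep]
      rw [rew_mid T t _ _ (by omega) htT (by rw [hstep]; simp; omega),
        ih (t+1) (x+1) (by omega) hn0 (by omega) (by push_cast; omega)]
      ring

lemma step_right_min (T : ℕ) (hT : 4 ≤ T) (g : Bool) (t : ℕ) (ht : 2 ≤ t) :
    stepP 0 ((T:ℤ)-2) ((min (t:ℤ) ((T:ℤ)-2), 0), g) 1 =
      ((min ((t:ℤ)+1) ((T:ℤ)-2), 0), g) := by
  rcases le_or_gt ((t:ℤ)+1) ((T:ℤ)-2) with h | h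
  · rw [min_eq_left (by omega), min_eq_left h]
    exact step_right T g (t:ℤ) (by omega) h
  · rw [min_eq_right (by omega), min_eq_right (by omega)]
    exact step_wall T g hT

lemma retRight0 (T : ℕ) (hT : 4 ≤ T) (g : Bool) :
    ∀ n t, 2 ≤ t → t + n ≤ T →
      dRetA T (planRight T) n t ((min (t:ℤ) ((T:ℤ)-2), 0), g) = 0 := by
  intro n
  induction n with
  | zero => intro t _ _; rfl
  | succ n ih =>
    intro t ht htn
    have htT : t < T := by omega
    have hplan : planRight T t = 1 := by unfold planRight; rw [if_pos htT]
    have hstep := step_right_min T hT g t ht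
    rw [← hplan] at hstep
    simp only [dRetA, hstep]
    rw [rew_mid T t _ _ (by omega) htT (by rw [hstep]; simp; omega)]
    have := ih (t+1) (by omega) (by omega)
    push_cast at this
    rw [this]; ring

lemma retRight_final (T : ℕ) (hT : 4 ≤ T) (g : Bool) :
    dRetA T (planRight T) 1 T ((min (T:ℤ) ((T:ℤ)-2), 0), g) =
      if g then 1 else 0 := by
  have hplan : planRight T T = 2 := by unfold planRight; rw [if_neg (by omega)]
  rw [min_eq_right (by omega)]
  have hstep : stepP 0 ((T:ℤ)-2) (((T:ℤ)-2, 0), g) (planRight T T) =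
      (((T:ℤ)-2, 1), g) := by
    rw [hplan]; simp [stepP, validP, dir]
  simp only [dRetA, hstep]
  rw [rewA]
  simp only [hstep]
  rw [if_neg (by omega), if_neg (by omega)]
  cases g
  · rw [if_neg (by simp [goalCell])]; norm_num
  · rw [if_pos (by simp [goalCell])]; norm_num

lemma retRight1 (T : ℕ) (hT : 4 ≤ T) (g : Bool) :
    ∀ n t, 2 ≤ t → 1 ≤ n → t + n = T + 1 →
      dRetA T (planRight T) n t ((min (t:ℤ) ((T:ℤ)-2), 0), g) = if g then 1 else 0 := by
  intro n
  induction n with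
  | zero => omega
  | succ n ih =>
    intro t ht hn htn
    rcases Nat.eq_zero_or_pos n with hn0 | hn0
    · subst hn0
      rw [show t = T from by omega]
      exact retRight_final T hT g
    · have htT : t < T := by omega
      have hplan : planRight T t = 1 := by unfold planRight; rw [if_pos htT]
      have hstep := step_right_min T hT g t ht
      rw [← hplan] at hstep
      simp only [dRetA, hstep]
      rw [rew_mid T t _ _ (by omega) htT (by rw [hstep]; simp; omega)]
      have := ih (t+1) (by omega) hn0 (by omega)
      push_cast at this
      rw [this]; ring

lemma dLeft_init (T : ℕ) (hT : 4 ≤ T) (g : Bool) (n : ℕ) :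
    dRetA T (planLeft T g) (n+1) 1 ((1, 0), g) =
      dRetA T (planLeft T g) n 2 ((0, 0), g) := by
  have hplan : planLeft T g 1 = 0 := by unfold planLeft; rw [if_pos rfl]
  have hstep : stepP 0 ((T:ℤ)-2) (((1:ℤ), 0), g) (planLeft T g 1) = ((0, 0), g) := by
    rw [hplan, stepP, if_pos (by rw [dir0]; left; norm_num; omega)]
    rw [dir0]; norm_num
  simp only [dRetA, hstep]
  have : rewA T 1 (((1:ℤ), 0), g) (planLeft T g 1) = 0 := by simp [rewA]
  rw [this, zero_add]

lemma dRight_init (T : ℕ) (hT : 4 ≤ T) (g : Bool) (n : ℕ) :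
    dRetA T (planRight T) (n+1) 1 ((1, 0), g) =
      dRetA T (planRight T) n 2 ((2, 0), g) := by
  have hplan : planRight T 1 = 1 := by unfold planRight; rw [if_pos (by omega)]
  have hstep : stepP 0 ((T:ℤ)-2) (((1:ℤ), 0), g) (planRight T 1) = ((2, 0), g) := by
    rw [hplan, stepP, if_pos (by rw [dir1]; left; norm_num; omega)]
    rw [dir1]; norm_num
  simp only [dRetA, hstep]
  have : rewA T 1 (((1:ℤ), 0), g) (planRight T 1) = 0 := by simp [rewA]
  rw [this, zero_add]

lemma dLeft_lt (T : ℕ) (hT : 4 ≤ T) (g : Bool) (n : ℕ) (h1 : 1 ≤ n) (h2 : n < T) :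
    dRetA T (planLeft T g) n 1 ((1, 0), g) = 0 := by
  obtain ⟨m, rfl⟩ : ∃ m, n = m + 1 := ⟨n-1, by omega⟩
  rw [dLeft_init T hT g m]
  exact retLeft0 T hT g m 2 0 (by norm_num) (by omega) (by norm_num)

lemma dRight_lt (T : ℕ) (hT : 4 ≤ T) (g : Bool) (n : ℕ) (h1 : 1 ≤ n) (h2 : n < T) :
    dRetA T (planRight T) n 1 ((1, 0), g) = 0 := by
  obtain ⟨m, rfl⟩ : ∃ m, n = m + 1 := ⟨n-1, by omega⟩
  rw [dRight_init T hT g m]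
  have h2' : (2:ℤ) = min ((2:ℕ):ℤ) ((T:ℤ)-2) := by
    rw [min_eq_left (by push_cast; omega)]; norm_num
  rw [h2']
  exact retRight0 T hT g m 2 (by norm_num) (by omega)

lemma dLeft_T (T : ℕ) (hT : 4 ≤ T) (g : Bool) :
    dRetA T (planLeft T g) T 1 ((1, 0), g) = 1 := by
  obtain ⟨m, hm⟩ : ∃ m, T = m + 1 := ⟨T-1, by omega⟩
  calc dRetA T (planLeft T g) T 1 ((1,0),g)
      = dRetA T (planLeft T g) (m+1) 1 ((1,0),g) := by rw [← hm]
    _ = dRetA T (planLeft T g) m 2 ((0,0),g) := dLeft_init T hT g m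
    _ = 1 := retLeft1 T hT g m 2 0 (by norm_num) (by omega) (by omega) (by norm_num)

lemma dRight_T (T : ℕ) (hT : 4 ≤ T) (g : Bool) :
    dRetA T (planRight T) T 1 ((1, 0), g) = if g then 1 else 0 := by
  obtain ⟨m, hm⟩ : ∃ m, T = m + 1 := ⟨T-1, by omega⟩
  have h2' : (2:ℤ) = min ((2:ℕ):ℤ) ((T:ℤ)-2) := by
    rw [min_eq_left (by push_cast; omega)]; norm_num
  calc dRetA T (planRight T) T 1 ((1,0),g)
      = dRetA T (planRight T) (m+1) 1 ((1,0),g) := by rw [← hm]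
    _ = dRetA T (planRight T) m 2 ((2,0),g) := dRight_init T hT g m
    _ = if g then 1 else 0 := by
        rw [h2']; exact retRight1 T hT g m 2 (by norm_num) (by omega) (by omega)

/-- in the Active T-Maze with horizon `T`, the credit assignment length of
the first time step is `T`: the optimal initial action (Left, to the oracle) has the same
expected `n`-step reward as moving Right for every `n < T`, and is strictly better
exactly at `n = T` (expected terminal reward 1 versus 1/2). -/
theorem active_tmaze_credit_assignment_length_T (T : ℕ) (hT : 4 ≤ T) :
    (∀ n, 1 ≤ n → n < T → GLeft T n = GRight T n) ∧
    GRight T T < GLeft T T ∧ GLeft T T = 1 ∧ GRight T T = 1 / 2 := by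
  have hL : GLeft T T = 1 := by
    unfold GLeft; rw [dLeft_T T hT true, dLeft_T T hT false]; norm_num
  have hR : GRight T T = 1 / 2 := by
    unfold GRight; rw [dRight_T T hT true, dRight_T T hT false]; norm_num
  refine ⟨fun n h1 h2 => ?_, by rw [hL, hR]; norm_num, hL, hR⟩
  unfold GLeft GRight
  rw [dLeft_lt T hT true n h1 h2, dLeft_lt T hT false n h1 h2,
    dRight_lt T hT true n h1 h2, dRight_lt T hT false n h1 h2]
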